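/- arXiv:1608.07613 — 6 statements merged into one kernel-verified Lean document; each statement's English description precedes it below -/
import Mathlib

section
/- Let V = ⊕_{i=0}^d U_i be a direct sum of subspaces of a finite-dimensional vector space over F (with U_{-1} = U_{d+1} = 0). Let q ∈ F be nonzero with q^{2i} ≠ 1 for 1 ≤ i ≤ d, let K : V → V act on U_i as q^{d-2i}, and let R : V → V satisfy R U_i ⊆ U_{i+1} for 0 ≤ i ≤ d. Then there exists at most one F-linear map ψ : V → V such that ψ U_i ⊆ U_{i-1} for 0 ≤ i ≤ d and ψR - Rψ = (q - q^{-1})(K - K^{-1}). -/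
noncomputable def auxS {F : Type*} [Field F] (q : F) (d i k : ℕ) : F :=
  q ^ ((d : ℤ) - 2 * (i : ℤ) + 1) - q ^ (2 * ((i : ℤ) + (k : ℤ)) - (d : ℤ) - 1)
  - q ^ ((d : ℤ) - 2 * ((i : ℤ) + (k : ℤ)) + 1) + q ^ (2 * (i : ℤ) - (d : ℤ) - 1)

theorem auxS_zero {F : Type*} [Field F] (q : F) (d i : ℕ) : auxS q d i 0 = 0 := by
  simp only [auxS, Nat.cast_zero, add_zero]; ring

theorem auxS_rec {F : Type*} [Field F] {q : F} (hq : q ≠ 0) (d i k : ℕ) :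
    auxS q d i (k + 1) =
      (q - q⁻¹) * (q ^ ((d : ℤ) - 2 * (i : ℤ)) - q ^ (2 * (i : ℤ) - (d : ℤ)))
        + auxS q d (i + 1) k := by
  unfold auxS
  push_cast
  rw [show (2 * ((i : ℤ) + ((k:ℤ)+1)) - (d : ℤ) - 1) = 2*(((i : ℤ)+1) + (k : ℤ)) - (d : ℤ) - 1 by ring,
      show ((d : ℤ) - 2 * ((i : ℤ) + ((k:ℤ)+1)) + 1) = (d : ℤ) - 2 * (((i : ℤ)+1) + (k : ℤ)) + 1 by ring]
  have h : ∀ a : ℤ, q ^ (a+1) + q ^ (-a-1) = (q - q⁻¹) * (q ^ a - q ^ (-a)) + q ^ (a-1) + q ^ (-a+1) := by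
    intro a
    have h1 : ∀ x y : ℤ, q ^ (x+y) = q ^ x * q ^ y := fun x y => zpow_add₀ hq x y
    have h2 : ∀ x y : ℤ, q ^ (x-y) = q ^ x / q ^ y := fun x y => zpow_sub₀ hq x y
    have hb : q ^ a ≠ 0 := zpow_ne_zero a hq
    rw [h1, h2, h2, h1, zpow_neg, zpow_one]
    field_simp
    ring
  have h2 := h ((d:ℤ) - 2*(i:ℤ))
  rw [show (-((d:ℤ) - 2*(i:ℤ))-1) = 2 * (i : ℤ) - (d : ℤ) - 1 by ring,
      show (-((d:ℤ) - 2*(i:ℤ))) = 2 * (i : ℤ) - (d : ℤ) by ring,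
      show (((d:ℤ) - 2*(i:ℤ))-1) = (d : ℤ) - 2 * ((i:ℤ)+1) + 1 by ring,
      show (2*(i:ℤ) - (d:ℤ) + 1) = 2 * ((i : ℤ)+1) - (d : ℤ) - 1 by ring] at h2
  linear_combination h2

theorem auxS_factor {F : Type*} [Field F] {q : F} (hq : q ≠ 0) (d j k : ℕ) :
    auxS q d j k = (q ^ (2 * (k : ℤ)) - 1) * q ^ (2 * (j : ℤ) - (d : ℤ) - 1)
      * (q ^ (2 * ((d : ℤ) - 2 * (j : ℤ) + 1 - (k : ℤ))) - 1) := by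
  unfold auxS
  have h1 : ∀ x y : ℤ, q ^ x * q ^ y = q ^ (x+y) := fun x y => (zpow_add₀ hq x y).symm
  simp only [sub_mul, mul_sub, one_mul, mul_one, h1]
  ring

theorem auxS_ne {F : Type*} [Field F] {q : F} (hq : q ≠ 0) {d : ℕ}
    (hq2 : ∀ i : ℕ, 1 ≤ i → i ≤ d → q ^ (2 * i) ≠ 1) (j k : ℕ)
    (hk1 : 1 ≤ k) (hkd : k ≤ d)
    (he0 : (d : ℤ) - 2 * (j : ℤ) + 1 - (k : ℤ) ≠ 0)
    (habs : ((d : ℤ) - 2 * (j : ℤ) + 1 - (k : ℤ)).natAbs ≤ d) :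
    auxS q d j k ≠ 0 := by
  have hpos : ∀ e : ℤ, 0 < e → e.natAbs ≤ d → q ^ (2 * e) ≠ 1 := by
    intro e he hab
    rw [show (2 * e) = ((2 * e.natAbs : ℕ) : ℤ) by omega, zpow_natCast]
    exact hq2 e.natAbs (by omega) hab
  have hone : ∀ e : ℤ, e ≠ 0 → e.natAbs ≤ d → q ^ (2 * e) ≠ 1 := by
    intro e he hab
    rcases lt_or_gt_of_ne he with hneg | hp
    · rw [show (2 * e) = -(2 * (-e)) by ring, zpow_neg]
      intro h
      exact hpos (-e) (by omega) (by omega) (inv_eq_one.mp h)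
    · exact hpos e hp hab
  rw [auxS_factor hq]
  refine mul_ne_zero (mul_ne_zero ?_ (zpow_ne_zero _ hq)) ?_
  · exact sub_ne_zero_of_ne (hone (k : ℤ) (by omega) (by omega))
  · exact sub_ne_zero_of_ne (hone _ he0 habs)

/-- uniqueness of the Bockting operator `ψ`.  Here
`V = ⊕_{i=0}^d U_i` (with `U_j = ⊥` for `j > d`), `K` acts on `U_i` as
`q^{d-2i}` with inverse `Ki` acting as `q^{2i-d}`, and `R` raises the grading.
Any two maps `ψ` lowering the grading and satisfying
`ψR - Rψ = (q - q⁻¹)(K - K⁻¹)` are equal. -/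
theorem bockting_psi_unique
    {F : Type*} [Field F] {V : Type*} [AddCommGroup V] [Module F V]
    [FiniteDimensional F V]
    (q : F) (hq : q ≠ 0) (d : ℕ)
    (hq2 : ∀ i : ℕ, 1 ≤ i → i ≤ d → q ^ (2 * i) ≠ 1)
    (U : ℕ → Submodule F V)
    (hUsupp : ∀ j : ℕ, d < j → U j = ⊥)
    (hind : iSupIndep U) (hsup : ⨆ i, U i = ⊤)
    (K Ki : Module.End F V)
    (hK : ∀ i : ℕ, i ≤ d → ∀ v ∈ U i, K v = q ^ ((d : ℤ) - 2 * (i : ℤ)) • v)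
    (hKi : ∀ i : ℕ, i ≤ d → ∀ v ∈ U i, Ki v = q ^ (2 * (i : ℤ) - (d : ℤ)) • v)
    (R : Module.End F V)
    (hR : ∀ i : ℕ, (U i).map R ≤ U (i + 1)) :
    ∀ ψ₁ ψ₂ : Module.End F V,
      (∀ i : ℕ, i ≤ d → (U i).map ψ₁ ≤ if i = 0 then ⊥ else U (i - 1)) →
      ψ₁ * R - R * ψ₁ = (q - q⁻¹) • (K - Ki) →
      (∀ i : ℕ, i ≤ d → (U i).map ψ₂ ≤ if i = 0 then ⊥ else U (i - 1)) →
      ψ₂ * R - R * ψ₂ = (q - q⁻¹) • (K - Ki) →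
      ψ₁ = ψ₂ := by
  intro ψ₁ ψ₂ hψ₁ hrel₁ hψ₂ hrel₂
  -- basic application lemmas for powers of R
  have hps : ∀ (n : ℕ) (x : V), (R^(n+1)) x = (R^n) (R x) := by
    intro n x; rw [pow_succ]; rfl
  have hps' : ∀ (n : ℕ) (x : V), (R^(n+1)) x = R ((R^n) x) := by
    intro n x; rw [pow_succ']; rfl
  -- lowering facts
  have hlow : ∀ (ψ : Module.End F V),
      (∀ i : ℕ, i ≤ d → (U i).map ψ ≤ if i = 0 then ⊥ else U (i - 1)) →
      ∀ i : ℕ, 1 ≤ i → i ≤ d → ∀ v ∈ U i, ψ v ∈ U (i - 1) := by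
    intro ψ hψ i h1 h2 v hv
    have h := hψ i h2 (Submodule.mem_map_of_mem hv)
    rwa [if_neg (by omega)] at h
  have hzero : ∀ (ψ : Module.End F V),
      (∀ i : ℕ, i ≤ d → (U i).map ψ ≤ if i = 0 then ⊥ else U (i - 1)) →
      ∀ v ∈ U 0, ψ v = 0 := by
    intro ψ hψ v hv
    have h := hψ 0 (Nat.zero_le d) (Submodule.mem_map_of_mem hv)
    rw [if_pos rfl] at h
    simpa using h
  -- membership of R powers
  have hRmem : ∀ i : ℕ, ∀ v ∈ U i, R v ∈ U (i+1) := by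
    intro i v hv; exact hR i (Submodule.mem_map_of_mem hv)
  have hRpow : ∀ (k i : ℕ), ∀ v ∈ U i, (R^k) v ∈ U (i+k) := by
    intro k
    induction k with
    | zero => intro i v hv; simpa using hv
    | succ k ih =>
      intro i v hv
      rw [hps]
      have h := ih (i+1) (R v) (hRmem i v hv)
      rwa [show i+1+k = i+(k+1) by omega] at h
  -- pointwise relation
  have hrelpt : ∀ (ψ : Module.End F V), ψ * R - R * ψ = (q - q⁻¹) • (K - Ki) →
      ∀ i : ℕ, i ≤ d → ∀ v ∈ U i,
      ψ (R v) = R (ψ v)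
        + ((q - q⁻¹) * (q ^ ((d : ℤ) - 2 * (i : ℤ)) - q ^ (2 * (i : ℤ) - (d : ℤ)))) • v := by
    intro ψ hrel i hi v hv
    have h := LinearMap.congr_fun hrel v
    simp only [LinearMap.sub_apply, Module.End.mul_apply, LinearMap.smul_apply] at h
    rw [hK i hi v hv, hKi i hi v hv] at h
    rw [sub_eq_iff_eq_add] at h
    rw [h, smul_sub, smul_smul, smul_smul, ← sub_smul, ← mul_sub]
    abel
  -- iterated relation
  have hiter : ∀ (ψ : Module.End F V), ψ * R - R * ψ = (q - q⁻¹) • (K - Ki) →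
      ∀ k i : ℕ, i + k ≤ d + 1 → ∀ v ∈ U i,
      ψ ((R^k) v) = (R^k) (ψ v) + auxS q d i k • (R^(k-1)) v := by
    intro ψ hrel k
    induction k with
    | zero => intro i hi v hv; simp [auxS_zero]
    | succ k ih =>
      intro i hi v hv
      rw [hps, ih (i+1) (by omega) (R v) (hRmem i v hv),
          hrelpt ψ hrel i (by omega) v hv, map_add, map_smul,
          ← hps, auxS_rec hq, add_smul, Nat.add_sub_cancel]
      rcases Nat.eq_zero_or_pos k with hk0 | hk1
      · subst hk0; simp [auxS_zero]
      · have : (R^(k-1)) (R v) = (R^k) v := by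
          rw [show k = (k-1)+1 by omega, hps, Nat.add_sub_cancel]
        rw [this]
        abel
  -- commutation of the difference with R
  have h0 : ψ₁ * R - R * ψ₁ = ψ₂ * R - R * ψ₂ := hrel₁.trans hrel₂.symm
  have hc : (ψ₁ - ψ₂) * R = R * (ψ₁ - ψ₂) := by
    rw [sub_mul, mul_sub, sub_eq_sub_iff_sub_eq_sub]
    exact h0
  have hcpow : ∀ (k : ℕ) (x : V),
      ψ₁ ((R^k) x) - ψ₂ ((R^k) x) = (R^k) (ψ₁ x - ψ₂ x) := by
    intro k x
    have hcomm : (ψ₁ - ψ₂) * R^k = R^k * (ψ₁ - ψ₂) := (Commute.pow_right hc k)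
    have h := LinearMap.congr_fun hcomm x
    simpa only [LinearMap.sub_apply, Module.End.mul_apply, map_sub] using h
  -- L3 : injectivity of R^(d-2i) on U i
  have L3 : ∀ i : ℕ, 2*i ≤ d → ∀ v ∈ U i, (R^(d - 2*i)) v = 0 → v = 0 := by
    intro i
    induction i with
    | zero =>
      intro _ v hv hRv
      have hψv : ψ₁ v = 0 := hzero ψ₁ hψ₁ v hv
      have key : ∀ t : ℕ, t ≤ d → (R^t) v = 0 → v = 0 := by
        intro t
        induction t with
        | zero => intro _ h; simpa using h
        | succ t iht =>
          intro ht h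
          have hid := hiter ψ₁ hrel₁ (t+1) 0 (by omega) v hv
          rw [h, hψv, map_zero, map_zero, zero_add, Nat.add_sub_cancel] at hid
          have hS : auxS q d 0 (t+1) ≠ 0 := by
            refine auxS_ne hq hq2 0 (t+1) (by omega) (by omega) (by omega) (by omega)
          have hz : (R^t) v = 0 := by
            rcases smul_eq_zero.mp hid.symm with h' | h'
            · exact absurd h' hS
            · exact h'
          exact iht (by omega) hz
      exact key (d - 2*0) (by omega) hRv
    | succ i ih =>
      intro h2 v hv hRv
      set k := d - 2*(i+1) with hk
      by_cases hk0 : k = 0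
      · rw [hk0] at hRv
        simpa using hRv
      · have hvlow : ψ₁ v ∈ U i := by
          have h := hlow ψ₁ hψ₁ (i+1) (by omega) (by omega) v hv
          simpa using h
        have hid := hiter ψ₁ hrel₁ k (i+1) (by omega) v hv
        rw [hRv, map_zero] at hid
        have happ := congrArg (fun x => R x) hid
        simp only [map_zero, map_add, map_smul] at happ
        rw [← hps', ← hps'] at happ
        have e2 : (R^((k-1)+1)) v = (R^k) v := by rw [show (k-1)+1 = k by omega]
        rw [e2, hRv, smul_zero, add_zero] at happ
        have hψv0 : ψ₁ v = 0 := by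
          apply ih (by omega) (ψ₁ v) hvlow
          rw [show d - 2*i = (k+1)+1 by omega, hps']
          rw [← happ, map_zero]
        have key : ∀ t : ℕ, t ≤ k → (R^t) v = 0 → v = 0 := by
          intro t
          induction t with
          | zero => intro _ h; simpa using h
          | succ t iht =>
            intro ht h
            have hid2 := hiter ψ₁ hrel₁ (t+1) (i+1) (by omega) v hv
            rw [h, hψv0, map_zero, map_zero, zero_add, Nat.add_sub_cancel] at hid2
            have hS : auxS q d (i+1) (t+1) ≠ 0 := by
              refine auxS_ne hq hq2 (i+1) (t+1) (by omega) (by omega) (by omega) (by omega)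
            have hz : (R^t) v = 0 := by
              rcases smul_eq_zero.mp hid2.symm with h' | h'
              · exact absurd h' hS
              · exact h'
            exact iht (by omega) hz
        exact key k le_rfl hRv
  -- G : R^m U_i ⊆ R^(m+1) U_(i-1) in the stable range
  have Gtriv : ∀ i m : ℕ, d + 1 ≤ i + m → ∀ v ∈ U i,
      ∃ u ∈ U (i-1), (R^m) v = (R^(m+1)) u := by
    intro i m him v hv
    refine ⟨0, Submodule.zero_mem _, ?_⟩
    have h := hRpow m i v hv
    rw [hUsupp (i+m) (by omega)] at h
    rw [Submodule.mem_bot] at h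
    rw [h, map_zero]
  have G : ∀ i : ℕ, 1 ≤ i → ∀ n m : ℕ, d + 1 ≤ i + m + n →
      (d:ℤ) - 2*(i:ℤ) + 1 ≤ (m:ℤ) → ∀ v ∈ U i,
      ∃ u ∈ U (i-1), (R^m) v = (R^(m+1)) u := by
    intro i hi1 n
    induction n with
    | zero => intro m hmn _ v hv; exact Gtriv i m (by omega) v hv
    | succ n ihn =>
      intro m hmn hm v hv
      by_cases hd : d + 1 ≤ i + m
      · exact Gtriv i m hd v hv
      · push_neg at hd
        obtain ⟨u, hu, hu2⟩ := ihn (m+1) (by omega) (by push_cast; omega) v hv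
        have hiv := hiter ψ₁ hrel₁ (m+1) i (by omega) v hv
        have hiu := hiter ψ₁ hrel₁ (m+2) (i-1) (by omega) u hu
        rw [hu2, hiu, Nat.add_sub_cancel] at hiv
        rw [show m+2-1 = m+1 by omega] at hiv
        have hS : auxS q d i (m+1) ≠ 0 := by
          refine auxS_ne hq hq2 i (m+1) (by omega) (by omega) (by omega) (by omega)
        refine ⟨(auxS q d i (m+1))⁻¹ •
          (R (ψ₁ u) + auxS q d (i-1) (m+2) • u - ψ₁ v), ?_, ?_⟩
        · refine Submodule.smul_mem _ _ (sub_mem (add_mem ?_ (Submodule.smul_mem _ _ hu)) ?_)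
          · by_cases hi2 : 2 ≤ i
            · have h := hlow ψ₁ hψ₁ (i-1) (by omega) (by omega) u hu
              have h2 := hRmem (i-1-1) _ h
              rwa [show i-1-1+1 = i-1 by omega] at h2
            · have hi1' : i = 1 := by omega
              subst hi1'
              rw [hzero ψ₁ hψ₁ u (by simpa using hu), map_zero]
              exact Submodule.zero_mem _
          · exact hlow ψ₁ hψ₁ i (by omega) (by omega) v hv
        · have hmain : (R^(m+1)) (R (ψ₁ u) + auxS q d (i-1) (m+2) • u - ψ₁ v)
              = auxS q d i (m+1) • (R^m) v := by
            rw [map_sub, map_add, map_smul, ← hps]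
            rw [show (m+1)+1 = m+2 from rfl]
            rw [sub_eq_iff_eq_add, add_comm (auxS q d i (m+1) • (R^m) v)]
            exact hiv
          rw [map_smul, hmain, smul_smul, inv_mul_cancel₀ hS, one_smul]
  -- main induction
  have main : ∀ i : ℕ, i ≤ d → ∀ v ∈ U i, ψ₁ v = ψ₂ v := by
    intro i
    induction i with
    | zero => intro _ v hv; rw [hzero ψ₁ hψ₁ v hv, hzero ψ₂ hψ₂ v hv]
    | succ i ih =>
      intro hi v hv
      set m := d - (2*i+1) with hm
      obtain ⟨u, hu, hu2⟩ := G (i+1) (by omega) (d+1) m (by omega) (by omega) v hv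
      have hu' : u ∈ U i := by simpa using hu
      have hκ : (R^m) (v - R u) = 0 := by
        rw [map_sub, hu2, hps]
        exact sub_self _
      have hκU : v - R u ∈ U (i+1) := sub_mem hv (hRmem i u hu')
      have hw1 : ψ₁ (v - R u) ∈ U i := by
        have h := hlow ψ₁ hψ₁ (i+1) (by omega) (by omega) _ hκU
        simpa using h
      have hw2 : ψ₂ (v - R u) ∈ U i := by
        have h := hlow ψ₂ hψ₂ (i+1) (by omega) (by omega) _ hκU
        simpa using h
      have hwR : (R^m) (ψ₁ (v - R u) - ψ₂ (v - R u)) = 0 := by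
        rw [← hcpow m (v - R u), hκ, map_zero, map_zero, sub_self]
      have hw0 : ψ₁ (v - R u) = ψ₂ (v - R u) := by
        by_cases hcase : 2*i + 1 ≤ d
        · have hz : ψ₁ (v - R u) - ψ₂ (v - R u) = 0 := by
            apply L3 i (by omega) _ (sub_mem hw1 hw2)
            rw [show d - 2*i = m+1 by omega, hps', hwR, map_zero]
          exact sub_eq_zero.mp hz
        · have hm0 : m = 0 := by omega
          rw [hm0] at hκ
          have : v - R u = 0 := by simpa using hκ
          rw [this]
          simp
      have hΔRu : ψ₁ (R u) = ψ₂ (R u) := by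
        have h := LinearMap.congr_fun hc u
        simp only [Module.End.mul_apply, LinearMap.sub_apply] at h
        rw [ih (by omega) u hu', sub_self, map_zero] at h
        exact sub_eq_zero.mp h
      have hv' : v = (v - R u) + R u := by abel
      calc ψ₁ v = ψ₁ ((v - R u) + R u) := by rw [← hv']
        _ = ψ₁ (v - R u) + ψ₁ (R u) := map_add _ _ _
        _ = ψ₂ (v - R u) + ψ₂ (R u) := by rw [hw0, hΔRu]
        _ = ψ₂ ((v - R u) + R u) := (map_add _ _ _).symm
        _ = ψ₂ v := by rw [← hv']
  -- conclude
  have hker : ∀ j : ℕ, U j ≤ LinearMap.ker (ψ₁ - ψ₂) := by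
    intro j
    by_cases hj : j ≤ d
    · intro v hv
      rw [LinearMap.mem_ker, LinearMap.sub_apply, sub_eq_zero]
      exact main j hj v hv
    · rw [hUsupp j (by omega)]
      exact bot_le
  have htop : (⊤ : Submodule F V) ≤ LinearMap.ker (ψ₁ - ψ₂) := by
    rw [← hsup]; exact iSup_le hker
  have : ψ₁ - ψ₂ = 0 := LinearMap.ker_eq_top.mp (le_antisymm le_top htop)
  exact sub_eq_zero.mp this
end

section
/- Let F be a field, q ∈ F nonzero with q^{2i} ≠ 1 for 1 ≤ i ≤ d, and t ∈ F nonzero. Then the evaluation module V(d,t) for U_q(L(sl_2)) is irreducible: the only U_q(L(sl_2))-invariant subspaces are 0 and V(d,t). -/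
/-- The quantum integer `[n]_q = (q^n - q^{-n})/(q - q⁻¹)`. -/
noncomputable def brk {F : Type*} [Field F] (q : F) (n : ℤ) : F :=
  (q ^ n - q ^ (-n)) / (q - q⁻¹)

/-- Matrix of `K₁` on the evaluation module `V(d,t)`. -/
noncomputable def evalK1 {F : Type*} [Field F] (q : F) (d : ℕ) :
    Matrix (Fin (d + 1)) (Fin (d + 1)) F :=
  Matrix.diagonal fun i => q ^ ((d : ℤ) - 2 * (i : ℕ))

/-- Matrix of `K₀` on the evaluation module `V(d,t)`. -/
noncomputable def evalK0 {F : Type*} [Field F] (q : F) (d : ℕ) :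
    Matrix (Fin (d + 1)) (Fin (d + 1)) F :=
  Matrix.diagonal fun i => q ^ (2 * ((i : ℕ) : ℤ) - (d : ℤ))

/-- Matrix of `E₁` on the evaluation module `V(d,t)`: `E₁ v_i = [d-i+1]_q v_{i-1}`. -/
noncomputable def evalE1 {F : Type*} [Field F] (q : F) (d : ℕ) :
    Matrix (Fin (d + 1)) (Fin (d + 1)) F :=
  Matrix.of fun r c => if (c : ℕ) = (r : ℕ) + 1 then brk q ((d : ℤ) - (c : ℕ) + 1) else 0

/-- Matrix of `F₁` on the evaluation module `V(d,t)`: `F₁ v_i = [i+1]_q v_{i+1}`. -/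
noncomputable def evalF1 {F : Type*} [Field F] (q : F) (d : ℕ) :
    Matrix (Fin (d + 1)) (Fin (d + 1)) F :=
  Matrix.of fun r c => if (r : ℕ) = (c : ℕ) + 1 then brk q ((c : ℕ) + 1) else 0

/-- Matrix of `E₀` on the evaluation module `V(d,t)`: `E₀ v_i = t [i+1]_q v_{i+1}`. -/
noncomputable def evalE0 {F : Type*} [Field F] (q t : F) (d : ℕ) :
    Matrix (Fin (d + 1)) (Fin (d + 1)) F :=
  Matrix.of fun r c => if (r : ℕ) = (c : ℕ) + 1 then t * brk q ((c : ℕ) + 1) else 0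

/-- Matrix of `F₀` on the evaluation module `V(d,t)`: `F₀ v_i = t⁻¹ [d-i+1]_q v_{i-1}`. -/
noncomputable def evalF0 {F : Type*} [Field F] (q t : F) (d : ℕ) :
    Matrix (Fin (d + 1)) (Fin (d + 1)) F :=
  Matrix.of fun r c => if (c : ℕ) = (r : ℕ) + 1 then t⁻¹ * brk q ((d : ℤ) - (c : ℕ) + 1) else 0

section Aux
variable {F : Type*} [Field F]

lemma brk_ne {q : F} (hq : q ≠ 0) {d : ℕ}
    (hq2 : ∀ i : ℕ, 1 ≤ i → i ≤ d → q ^ (2 * i) ≠ 1)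
    {n : ℤ} (h1 : 1 ≤ n) (h2 : n ≤ (d : ℤ)) : brk q n ≠ 0 := by
  have hd : 1 ≤ d := by omega
  have hk1 : 1 ≤ n.toNat := by omega
  have hk2 : n.toNat ≤ d := by omega
  have hn : (n.toNat : ℤ) = n := Int.toNat_of_nonneg (by omega)
  have hnum : q ^ n - q ^ (-n) ≠ 0 := by
    intro hc
    rw [sub_eq_zero] at hc
    apply hq2 n.toNat hk1 hk2
    have h2n : q ^ (2 * n) = 1 := by
      calc q ^ (2 * n) = q ^ n * q ^ n := by rw [two_mul, zpow_add₀ hq]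
      _ = q ^ n * q ^ (-n) := by rw [← hc]
      _ = 1 := by rw [← zpow_add₀ hq]; simp
    calc q ^ (2 * n.toNat) = q ^ ((2 * n.toNat : ℕ) : ℤ) := (zpow_natCast q _).symm
    _ = q ^ (2 * n) := by congr 1; omega
    _ = 1 := h2n
  have hden : q - q⁻¹ ≠ 0 := by
    intro hc
    rw [sub_eq_zero] at hc
    apply hq2 1 le_rfl hd
    have h1' : q * q = q * q⁻¹ := by rw [← hc]
    rw [mul_inv_cancel₀ hq] at h1'
    rw [pow_mul, pow_one, sq, h1']
  exact div_ne_zero hnum hden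

lemma mulVec_evalE1_apply (q : F) (d : ℕ) (x : Fin (d + 1) → F) (r : Fin (d + 1)) :
    (evalE1 q d).mulVec x r =
      if h : (r : ℕ) < d then
        brk q ((d : ℤ) - ((r : ℕ) + 1 : ℕ) + 1) * x ⟨(r : ℕ) + 1, by omega⟩
      else 0 := by
  simp only [Matrix.mulVec, dotProduct, evalE1, Matrix.of_apply]
  split_ifs with h
  · rw [Finset.sum_eq_single (⟨(r : ℕ) + 1, by omega⟩ : Fin (d + 1))]
    · simp
    · intro b _ hb
      beta_reduce
      rw [if_neg, zero_mul]
      intro hc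
      exact hb (Fin.ext hc)
    · simp
  · apply Finset.sum_eq_zero
    intro c _
    beta_reduce
    rw [if_neg, zero_mul]
    omega

lemma mulVec_evalF1_single (q : F) (d k : ℕ) (hk : k < d) :
    (evalF1 q d).mulVec (Pi.single (⟨k, by omega⟩ : Fin (d + 1)) 1) =
      brk q ((k : ℤ) + 1) •
        (Pi.single (⟨k + 1, by omega⟩ : Fin (d + 1)) (1 : F) : Fin (d + 1) → F) := by
  rw [Matrix.mulVec_single]
  ext r
  simp only [evalF1, Matrix.col_apply, MulOpposite.op_one, one_smul, Matrix.of_apply, Pi.smul_apply, Pi.single_apply, smul_eq_mul, mul_one]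
  by_cases h : (r : ℕ) = k + 1
  · rw [if_pos h, if_pos (Fin.ext h), mul_one]
  · rw [if_neg h, if_neg (fun hc => h (congrArg Fin.val hc)), mul_zero]

end Aux

/-- the evaluation module `V(d,t)` is irreducible: a subspace
invariant under the actions of `E₀, E₁, F₀, F₁, K₀, K₁` is `⊥` or `⊤`. -/
theorem evaluation_module_irreducible
    {F : Type*} [Field F] (q t : F) (hq : q ≠ 0) (ht : t ≠ 0) (d : ℕ)
    (hq2 : ∀ i : ℕ, 1 ≤ i → i ≤ d → q ^ (2 * i) ≠ 1)
    (p : Submodule F (Fin (d + 1) → F))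
    (hE1 : p.map (evalE1 q d).mulVecLin ≤ p)
    (hF1 : p.map (evalF1 q d).mulVecLin ≤ p)
    (hK1 : p.map (evalK1 q d).mulVecLin ≤ p)
    (hE0 : p.map (evalE0 q t d).mulVecLin ≤ p)
    (hF0 : p.map (evalF0 q t d).mulVecLin ≤ p)
    (hK0 : p.map (evalK0 q d).mulVecLin ≤ p) :
    p = ⊥ ∨ p = ⊤ := by
  classical
  rcases eq_or_ne p ⊥ with hbot | hbot
  · exact Or.inl hbot
  right
  obtain ⟨x, hxp, hx0⟩ : ∃ x ∈ p, x ≠ 0 := by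
    by_contra h
    push_neg at h
    exact hbot (by
      ext y
      simp only [Submodule.mem_bot]
      exact ⟨fun hy => h y hy, fun hy => hy ▸ p.zero_mem⟩)
  have key : ∀ m : ℕ, ∀ x : Fin (d + 1) → F, x ∈ p → ∀ hm : m < d + 1,
      x ⟨m, hm⟩ ≠ 0 → (∀ r : Fin (d + 1), m < (r : ℕ) → x r = 0) →
      Pi.single (0 : Fin (d + 1)) (1 : F) ∈ p := by
    intro m
    induction m with
    | zero =>
      intro x hxp hm hx0 hup
      have hx : Pi.single (0 : Fin (d + 1)) (1 : F) = (x ⟨0, hm⟩)⁻¹ • x := by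
        ext r
        by_cases h0 : r = 0
        · subst h0
          rw [Pi.single_eq_same, Pi.smul_apply, smul_eq_mul]
          exact (inv_mul_cancel₀ hx0).symm
        · have hr0 : 0 < (r : ℕ) :=
            Nat.pos_of_ne_zero (fun hc => h0 (Fin.ext (by simp [hc])))
          rw [Pi.single_eq_of_ne h0, Pi.smul_apply, hup r hr0, smul_zero]
      rw [hx]
      exact p.smul_mem _ hxp
    | succ j ih =>
      intro x hxp hm hx0 hup
      have hyp : (evalE1 q d).mulVec x ∈ p := hE1 (Submodule.mem_map_of_mem hxp)
      have hjd : j < d := by omega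
      apply ih _ hyp (by omega)
      · rw [mulVec_evalE1_apply, dif_pos hjd]
        apply mul_ne_zero
        · apply brk_ne hq hq2 <;> push_cast <;> omega
        · exact hx0
      · intro r hr
        rw [mulVec_evalE1_apply]
        split_ifs with h
        · rw [hup ⟨(r : ℕ) + 1, by omega⟩ (by show j + 1 < (r : ℕ) + 1; omega), mul_zero]
        · rfl
  have hs : (Finset.univ.filter fun r => x r ≠ 0).Nonempty := by
    rcases Function.ne_iff.mp hx0 with ⟨r, hr⟩
    exact ⟨r, by simpa using hr⟩
  set m := (Finset.univ.filter fun r => x r ≠ 0).max' hs with hmdef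
  have hxm : x m ≠ 0 := by
    have := (Finset.univ.filter fun r => x r ≠ 0).max'_mem hs
    simpa using this
  have hxup : ∀ r : Fin (d + 1), (m : ℕ) < (r : ℕ) → x r = 0 := by
    intro r hr
    by_contra hc
    have hle : r ≤ m := Finset.le_max' _ r (by simpa using hc)
    exact absurd (Fin.lt_def.mpr hr) (not_lt.mpr hle)
  have he0 : Pi.single (0 : Fin (d + 1)) (1 : F) ∈ p := by
    apply key (m : ℕ) x hxp m.isLt _ hxup
    rwa [Fin.eta]
  have hek : ∀ k : ℕ, ∀ hk : k < d + 1, Pi.single (⟨k, hk⟩ : Fin (d + 1)) (1 : F) ∈ p := by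
    intro k
    induction k with
    | zero => intro hk; exact he0
    | succ j ih =>
      intro hk
      have hjd : j < d := by omega
      have hprev := ih (by omega)
      have hmem : (evalF1 q d).mulVec (Pi.single (⟨j, by omega⟩ : Fin (d + 1)) 1) ∈ p :=
        hF1 (Submodule.mem_map_of_mem hprev)
      rw [mulVec_evalF1_single q d j hjd] at hmem
      have hb : brk q ((j : ℤ) + 1) ≠ 0 := by
        apply brk_ne hq hq2 <;> push_cast <;> omega
      have hsm := p.smul_mem (brk q ((j : ℤ) + 1))⁻¹ hmem
      rwa [smul_smul, inv_mul_cancel₀ hb, one_smul] at hsm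
  rw [Submodule.eq_top_iff']
  intro y
  rw [pi_eq_sum_univ y]
  apply Submodule.sum_mem
  intro i _
  apply p.smul_mem
  have hfun : (fun j => if i = j then (1 : F) else 0) = Pi.single i 1 := by
    ext j
    rw [Pi.single_apply]
    by_cases h : i = j
    · rw [if_pos h, if_pos h.symm]
    · rw [if_neg h, if_neg (fun hc => h hc.symm)]
  rw [hfun]
  have := hek (i : ℕ) i.isLt
  rwa [Fin.eta] at this
end

section
/- In U_q(L(sl_2)), set X_{13} = K_1, X_{31} = K_0, X_{01} = K_0 + q(q-q^{-1})K_0 F_0, X_{12} = K_1 - (q-q^{-1})E_1, X_{23} = K_1 + q(q-q^{-1})K_1 F_1, X_{30} = K_0 - (q-q^{-1})E_0. Then these elements satisfy the equitable relations: X_{13}X_{31} = X_{31}X_{13} = 1, and (q X Y - q^{-1} Y X)/(q - q^{-1}) = 1 for each of the pairs (X,Y) = (X_{01},X_{12}), (X_{12},X_{23}), (X_{23},X_{30}), (X_{30},X_{01}), (X_{01},X_{13}), (X_{31},X_{12}), (X_{23},X_{31}), (X_{13},X_{30}). -/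
set_option maxHeartbeats 4000000


/-- The defining relations of `U_q(L(sl_2))` in the Chevalley presentation,
for elements `e0, e1, f0, f1, k0, k1, k0i, k1i` of an `F`-algebra `A`. -/
def ChevRel {F : Type*} [Field F] {A : Type*} [Ring A] [Algebra F A] (q : F)
    (e0 e1 f0 f1 k0 k1 k0i k1i : A) : Prop :=
  k0 * k0i = 1 ∧ k0i * k0 = 1 ∧ k1 * k1i = 1 ∧ k1i * k1 = 1 ∧
  k0 * k1 = 1 ∧ k1 * k0 = 1 ∧
  k0 * e0 = q ^ 2 • (e0 * k0) ∧ k0 * f0 = q⁻¹ ^ 2 • (f0 * k0) ∧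
  k1 * e1 = q ^ 2 • (e1 * k1) ∧ k1 * f1 = q⁻¹ ^ 2 • (f1 * k1) ∧
  k0 * e1 = q⁻¹ ^ 2 • (e1 * k0) ∧ k0 * f1 = q ^ 2 • (f1 * k0) ∧
  k1 * e0 = q⁻¹ ^ 2 • (e0 * k1) ∧ k1 * f0 = q ^ 2 • (f0 * k1) ∧
  e0 * f0 - f0 * e0 = (q - q⁻¹)⁻¹ • (k0 - k0i) ∧
  e1 * f1 - f1 * e1 = (q - q⁻¹)⁻¹ • (k1 - k1i) ∧
  e0 * f1 = f1 * e0 ∧ e1 * f0 = f0 * e1 ∧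
  e0 ^ 3 * e1 - (q ^ 2 + 1 + q⁻¹ ^ 2) • (e0 ^ 2 * e1 * e0)
    + (q ^ 2 + 1 + q⁻¹ ^ 2) • (e0 * e1 * e0 ^ 2) - e1 * e0 ^ 3 = 0 ∧
  e1 ^ 3 * e0 - (q ^ 2 + 1 + q⁻¹ ^ 2) • (e1 ^ 2 * e0 * e1)
    + (q ^ 2 + 1 + q⁻¹ ^ 2) • (e1 * e0 * e1 ^ 2) - e0 * e1 ^ 3 = 0 ∧
  f0 ^ 3 * f1 - (q ^ 2 + 1 + q⁻¹ ^ 2) • (f0 ^ 2 * f1 * f0)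
    + (q ^ 2 + 1 + q⁻¹ ^ 2) • (f0 * f1 * f0 ^ 2) - f1 * f0 ^ 3 = 0 ∧
  f1 ^ 3 * f0 - (q ^ 2 + 1 + q⁻¹ ^ 2) • (f1 ^ 2 * f0 * f1)
    + (q ^ 2 + 1 + q⁻¹ ^ 2) • (f1 * f0 * f1 ^ 2) - f0 * f1 ^ 3 = 0

/-- the elements `X_{ij}` defined from the Chevalley generators
satisfy the equitable relations. -/
theorem equitable_relations
    {F : Type*} [Field F] {A : Type*} [Ring A] [Algebra F A]
    (q : F) (hq : q ≠ 0) (hq2 : q ^ 2 ≠ 1)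
    (e0 e1 f0 f1 k0 k1 k0i k1i : A)
    (h : ChevRel q e0 e1 f0 f1 k0 k1 k0i k1i)
    (x01 x12 x23 x30 x13 x31 : A)
    (hx13 : x13 = k1) (hx31 : x31 = k0)
    (hx01 : x01 = k0 + (q * (q - q⁻¹)) • (k0 * f0))
    (hx12 : x12 = k1 - (q - q⁻¹) • e1)
    (hx23 : x23 = k1 + (q * (q - q⁻¹)) • (k1 * f1))
    (hx30 : x30 = k0 - (q - q⁻¹) • e0) :
    x13 * x31 = 1 ∧ x31 * x13 = 1 ∧
    (q - q⁻¹)⁻¹ • (q • (x01 * x12) - q⁻¹ • (x12 * x01)) = 1 ∧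
    (q - q⁻¹)⁻¹ • (q • (x12 * x23) - q⁻¹ • (x23 * x12)) = 1 ∧
    (q - q⁻¹)⁻¹ • (q • (x23 * x30) - q⁻¹ • (x30 * x23)) = 1 ∧
    (q - q⁻¹)⁻¹ • (q • (x30 * x01) - q⁻¹ • (x01 * x30)) = 1 ∧
    (q - q⁻¹)⁻¹ • (q • (x01 * x13) - q⁻¹ • (x13 * x01)) = 1 ∧
    (q - q⁻¹)⁻¹ • (q • (x31 * x12) - q⁻¹ • (x12 * x31)) = 1 ∧
    (q - q⁻¹)⁻¹ • (q • (x23 * x31) - q⁻¹ • (x31 * x23)) = 1 ∧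
    (q - q⁻¹)⁻¹ • (q • (x13 * x30) - q⁻¹ • (x30 * x13)) = 1 := by

  obtain ⟨h1, h2, h3, h4, h5, h6, hke0, hkf0, hke1, hkf1, h01, h02, h10, h11,
    hc0, hc1, hef01, hef10, -, -, -, -⟩ := h
  rw [hx13, hx31, hx01, hx12, hx23, hx30]
  have hr : q - q⁻¹ ≠ 0 := by
    intro h0
    apply hq2
    field_simp at h0
    linear_combination h0
  have hb : (-1 : F) + q ^ 2 ≠ 0 := fun hcon => hq2 (by linear_combination hcon)
  have hrw2 : q - q⁻¹ = (-1 + q ^ 2) * q⁻¹ := by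
    field_simp
    ring
  have hrw : (q - q⁻¹)⁻¹ = (-1 + q ^ 2)⁻¹ * q := by rw [hrw2, mul_inv, inv_inv]
  rw [hrw] at hc0 hc1 ⊢
  rw [hrw2]
  generalize hG : (-1 + q ^ 2 : F) = B at hb hc0 hc1 ⊢
  -- trailing versions
  have K5 : ∀ x : A, k0 * (k1 * x) = x := fun x => by rw [← mul_assoc, h5, one_mul]
  have K6 : ∀ x : A, k1 * (k0 * x) = x := fun x => by rw [← mul_assoc, h6, one_mul]
  have K1 : ∀ x : A, k0 * (k0i * x) = x := fun x => by rw [← mul_assoc, h1, one_mul]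
  have K2 : ∀ x : A, k0i * (k0 * x) = x := fun x => by rw [← mul_assoc, h2, one_mul]
  have K3 : ∀ x : A, k1 * (k1i * x) = x := fun x => by rw [← mul_assoc, h3, one_mul]
  have K4 : ∀ x : A, k1i * (k1 * x) = x := fun x => by rw [← mul_assoc, h4, one_mul]
  have E00 : ∀ x : A, k0 * (e0 * x) = q ^ 2 • (e0 * (k0 * x)) := fun x => by
    rw [← mul_assoc, hke0, smul_mul_assoc, mul_assoc]
  have F00 : ∀ x : A, k0 * (f0 * x) = q⁻¹ ^ 2 • (f0 * (k0 * x)) := fun x => by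
    rw [← mul_assoc, hkf0, smul_mul_assoc, mul_assoc]
  have E11 : ∀ x : A, k1 * (e1 * x) = q ^ 2 • (e1 * (k1 * x)) := fun x => by
    rw [← mul_assoc, hke1, smul_mul_assoc, mul_assoc]
  have F11 : ∀ x : A, k1 * (f1 * x) = q⁻¹ ^ 2 • (f1 * (k1 * x)) := fun x => by
    rw [← mul_assoc, hkf1, smul_mul_assoc, mul_assoc]
  have E01 : ∀ x : A, k0 * (e1 * x) = q⁻¹ ^ 2 • (e1 * (k0 * x)) := fun x => by
    rw [← mul_assoc, h01, smul_mul_assoc, mul_assoc]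
  have F01 : ∀ x : A, k0 * (f1 * x) = q ^ 2 • (f1 * (k0 * x)) := fun x => by
    rw [← mul_assoc, h02, smul_mul_assoc, mul_assoc]
  have E10 : ∀ x : A, k1 * (e0 * x) = q⁻¹ ^ 2 • (e0 * (k1 * x)) := fun x => by
    rw [← mul_assoc, h10, smul_mul_assoc, mul_assoc]
  have F10 : ∀ x : A, k1 * (f0 * x) = q ^ 2 • (f0 * (k1 * x)) := fun x => by
    rw [← mul_assoc, h11, smul_mul_assoc, mul_assoc]
  have C0 : e0 * f0 = f0 * e0 + (B⁻¹ * q) • k0 - (B⁻¹ * q) • k0i := by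
    have h' := eq_add_of_sub_eq hc0
    rw [smul_sub] at h'
    rw [h']
    abel
  have C1 : e1 * f1 = f1 * e1 + (B⁻¹ * q) • k1 - (B⁻¹ * q) • k1i := by
    have h' := eq_add_of_sub_eq hc1
    rw [smul_sub] at h'
    rw [h']
    abel
  have C0' : ∀ x : A, e0 * (f0 * x) = f0 * (e0 * x) + (B⁻¹ * q) • (k0 * x)
      - (B⁻¹ * q) • (k0i * x) := fun x => by
    rw [← mul_assoc, C0, sub_mul, add_mul, smul_mul_assoc, smul_mul_assoc, mul_assoc]
  have C1' : ∀ x : A, e1 * (f1 * x) = f1 * (e1 * x) + (B⁻¹ * q) • (k1 * x)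
      - (B⁻¹ * q) • (k1i * x) := fun x => by
    rw [← mul_assoc, C1, sub_mul, add_mul, smul_mul_assoc, smul_mul_assoc, mul_assoc]
  have D01 : ∀ x : A, e0 * (f1 * x) = f1 * (e0 * x) := fun x => by
    rw [← mul_assoc, hef01, mul_assoc]
  have D10 : ∀ x : A, e1 * (f0 * x) = f0 * (e1 * x) := fun x => by
    rw [← mul_assoc, hef10, mul_assoc]
  refine ⟨h6, h5, ?_, ?_, ?_, ?_, ?_, ?_, ?_, ?_⟩ <;>
  · simp only [mul_add, add_mul, mul_sub, sub_mul, smul_add, smul_sub, smul_smul,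
      mul_smul_comm, smul_mul_assoc, mul_assoc, one_mul, mul_one,
      K1, K2, K3, K4, K5, K6, E00, F00, E11, F11, E01, F01, E10, F10, C0', C1', D01, D10,
      C0, C1, h1, h2, h3, h4, h5, h6, hke0, hkf0, hke1, hkf1, h01, h02, h10, h11]
    match_scalars
    all_goals field_simp [hq, hb]
    all_goals try ring1
    all_goals (rw [← hG]; ring1)
end

section
/- Let U and V be U_q(L(sl_2))-modules and t ∈ F nonzero. Given L-operators for U and for V, each with parameter t, having components L^U_{rs} and L^V_{rs}, define maps M_{rs} : U ⊗ V → U ⊗ V by M_{rs}(u ⊗ v) = L^U_{r0}(u) ⊗ L^V_{0s}(v) + L^U_{r1}(u) ⊗ L^V_{1s}(v). Then the map on (U ⊗ V) ⊗ V(1,t) with components M_{rs} is an L-operator for the tensor product module U ⊗ V with parameter t. -/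
/-- The relations of Lemma 4.3 characterizing the components `L00, L01, L10, L11`
of an `L`-operator with parameter `t`. -/
def LOpRel {F : Type*} [Field F] {A : Type*} [Ring A] [Algebra F A] (q t : F)
    (E1 F1 K1 E0 F0 K0 L00 L01 L10 L11 : A) : Prop :=
  K1 * L00 = L00 * K1 ∧ K1 * L01 = q⁻¹ ^ 2 • (L01 * K1) ∧
  K1 * L10 = q ^ 2 • (L10 * K1) ∧ K1 * L11 = L11 * K1 ∧
  L00 * E1 - q • (E1 * L00) = L10 ∧
  L01 * E1 - q • (E1 * L01) = L11 - L00 * K1 ∧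
  L10 * E1 - q⁻¹ • (E1 * L10) = 0 ∧
  L11 * E1 - q⁻¹ • (E1 * L11) = -(L10 * K1) ∧
  F1 * L00 - q⁻¹ • (L00 * F1) = L01 ∧
  F1 * L01 - q • (L01 * F1) = 0 ∧
  F1 * L10 - q⁻¹ • (L10 * F1) = L11 - K0 * L00 ∧
  F1 * L11 - q • (L11 * F1) = -(K0 * L01) ∧
  K0 * L00 = L00 * K0 ∧ K0 * L01 = q ^ 2 • (L01 * K0) ∧
  K0 * L10 = q⁻¹ ^ 2 • (L10 * K0) ∧ K0 * L11 = L11 * K0 ∧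
  L00 * E0 - q⁻¹ • (E0 * L00) = -(t • (L01 * K0)) ∧
  L01 * E0 - q⁻¹ • (E0 * L01) = 0 ∧
  L10 * E0 - q • (E0 * L10) = t • L00 - t • (L11 * K0) ∧
  L11 * E0 - q • (E0 * L11) = t • L01 ∧
  F0 * L00 - q • (L00 * F0) = -(t⁻¹ • (K1 * L10)) ∧
  F0 * L01 - q⁻¹ • (L01 * F0) = t⁻¹ • L00 - t⁻¹ • (K1 * L11) ∧
  F0 * L10 - q • (L10 * F0) = 0 ∧
  F0 * L11 - q⁻¹ • (L11 * F0) = t⁻¹ • L10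


open TensorProduct in
private theorem map_sub_left' {F : Type*} [Field F] {U V : Type*}
    [AddCommGroup U] [Module F U] [AddCommGroup V] [Module F V]
    (f f' : Module.End F U) (g : Module.End F V) :
    TensorProduct.map (f - f') g = TensorProduct.map f g - TensorProduct.map f' g := by
  ext u v; simp [TensorProduct.sub_tmul]

open TensorProduct in
private theorem map_sub_right' {F : Type*} [Field F] {U V : Type*}
    [AddCommGroup U] [Module F U] [AddCommGroup V] [Module F V]
    (f : Module.End F U) (g g' : Module.End F V) :
    TensorProduct.map f (g - g') = TensorProduct.map f g - TensorProduct.map f g' := by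
  ext u v; simp [TensorProduct.tmul_sub]

open TensorProduct in
private theorem map_neg_left' {F : Type*} [Field F] {U V : Type*}
    [AddCommGroup U] [Module F U] [AddCommGroup V] [Module F V]
    (f : Module.End F U) (g : Module.End F V) :
    TensorProduct.map (-f) g = -TensorProduct.map f g := by
  ext u v; simp [TensorProduct.neg_tmul]

open TensorProduct in
private theorem map_neg_right' {F : Type*} [Field F] {U V : Type*}
    [AddCommGroup U] [Module F U] [AddCommGroup V] [Module F V]
    (f : Module.End F U) (g : Module.End F V) :
    TensorProduct.map f (-g) = -TensorProduct.map f g := by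
  ext u v; simp [TensorProduct.tmul_neg]

set_option maxHeartbeats 4000000 in
open TensorProduct in
/-- tensor product of `L`-operators.  Given `L`-operators (with
parameter `t`) for `U_q(L(sl_2))`-modules `U` and `V`, the maps
`M_{rs}(u ⊗ v) = L^U_{r0}(u) ⊗ L^V_{0s}(v) + L^U_{r1}(u) ⊗ L^V_{1s}(v)` are the
components of an `L`-operator with parameter `t` for the tensor product module
`U ⊗ V` (whose generators act via the coproduct). -/
theorem tensor_L_operator
    {F : Type*} [Field F] {U V : Type*}
    [AddCommGroup U] [Module F U] [AddCommGroup V] [Module F V]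
    (q t : F) (hq : q ≠ 0) (hq2 : q ^ 2 ≠ 1) (ht : t ≠ 0)
    (E1u F1u K1u E0u F0u K0u : Module.End F U)
    (hmodU : ChevRel q E0u E1u F0u F1u K0u K1u K1u K0u)
    (E1v F1v K1v E0v F0v K0v : Module.End F V)
    (hmodV : ChevRel q E0v E1v F0v F1v K0v K1v K1v K0v)
    (LU00 LU01 LU10 LU11 : Module.End F U)
    (hLU : LOpRel q t E1u F1u K1u E0u F0u K0u LU00 LU01 LU10 LU11)
    (LV00 LV01 LV10 LV11 : Module.End F V)
    (hLV : LOpRel q t E1v F1v K1v E0v F0v K0v LV00 LV01 LV10 LV11) :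
    LOpRel (A := Module.End F (U ⊗[F] V)) q t
      (TensorProduct.map E1u 1 + TensorProduct.map K1u E1v)
      (TensorProduct.map 1 F1v + TensorProduct.map F1u K0v)
      (TensorProduct.map K1u K1v)
      (TensorProduct.map E0u 1 + TensorProduct.map K0u E0v)
      (TensorProduct.map 1 F0v + TensorProduct.map F0u K1v)
      (TensorProduct.map K0u K0v)
      (TensorProduct.map LU00 LV00 + TensorProduct.map LU01 LV10)
      (TensorProduct.map LU00 LV01 + TensorProduct.map LU01 LV11)
      (TensorProduct.map LU10 LV00 + TensorProduct.map LU11 LV10)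
      (TensorProduct.map LU10 LV01 + TensorProduct.map LU11 LV11) := by
  obtain ⟨a1, a2, a3, a4, a5, a6, a7, a8, a9, a10, a11, a12, a13, a14, a15, a16, a17, a18, a19, a20, a21, a22, a23, a24⟩ := hLU
  obtain ⟨b1, b2, b3, b4, b5, b6, b7, b8, b9, b10, b11, b12, b13, b14, b15, b16, b17, b18, b19, b20, b21, b22, b23, b24⟩ := hLV
  rw [sub_eq_iff_eq_add] at a5 a6 a7 a8 a9 a10 a11 a12 a17 a18 a19 a20 a21 a22 a23 a24 b5 b6 b7 b8 b9 b10 b11 b12 b17 b18 b19 b20 b21 b22 b23 b24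
  refine ⟨?_, ?_, ?_, ?_, ?_, ?_, ?_, ?_, ?_, ?_, ?_, ?_, ?_, ?_, ?_, ?_, ?_, ?_, ?_, ?_, ?_, ?_, ?_, ?_⟩ <;>
  · simp only [mul_add, add_mul, ← TensorProduct.map_mul,
      a1, a2, a3, a4, a5, a6, a7, a8, a9, a10, a11, a12, a13, a14, a15, a16, a17, a18, a19, a20, a21, a22, a23, a24, b1, b2, b3, b4, b5, b6, b7, b8, b9, b10, b11, b12, b13, b14, b15, b16, b17, b18, b19, b20, b21, b22, b23, b24,
      one_mul, mul_one, zero_add, add_zero,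
      TensorProduct.map_add_left, TensorProduct.map_add_right,
      TensorProduct.map_smul_left, TensorProduct.map_smul_right,
      map_sub_left', map_sub_right', map_neg_left', map_neg_right',
      smul_add, smul_sub, smul_neg, smul_smul, sub_mul, mul_sub, neg_mul, mul_neg]
    try match_scalars <;> field_simp <;> ring
end

section
/- Let V be a U_q(L(sl_2))-module, a ∈ F nonzero, and let L be an L-operator for V with parameter a^2 whose component L_{00} is invertible on V. Set K = K_0, R = (q - q^{-1})(a q K_0 F_0 - a^{-1} E_1), and ψ̂ = -a (L_{00})^{-1} L_{01}. Then ψ̂ R - R ψ̂ = (q - q^{-1})(K - K^{-1}) as operators on V. -/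
set_option maxHeartbeats 2000000 in
/-- for an `L`-operator with parameter `a²` whose component
`L₀₀` is invertible, the map `ψ̂ = -a L₀₀⁻¹ L₀₁` satisfies
`ψ̂R - Rψ̂ = (q - q⁻¹)(K - K⁻¹)`, where `K = K₀`, `K⁻¹ = K₁` and
`R = (q - q⁻¹)(aq K₀F₀ - a⁻¹E₁)`. -/
theorem psi_hat_commutator
    {F : Type*} [Field F] {V : Type*} [AddCommGroup V] [Module F V]
    (q a : F) (hq : q ≠ 0) (hq2 : q ^ 2 ≠ 1) (ha : a ≠ 0)
    (E1 F1 K1 E0 F0 K0 : Module.End F V)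
    (hmod : ChevRel q E0 E1 F0 F1 K0 K1 K1 K0)
    (L00 L01 L10 L11 : Module.End F V)
    (hL : LOpRel q (a ^ 2) E1 F1 K1 E0 F0 K0 L00 L01 L10 L11)
    (L00i : Module.End F V) (hinv1 : L00 * L00i = 1) (hinv2 : L00i * L00 = 1)
    (R ψ : Module.End F V)
    (hR : R = (q - q⁻¹) • ((a * q) • (K0 * F0) - a⁻¹ • E1))
    (hψ : ψ = -(a • (L00i * L01))) :
    ψ * R - R * ψ = (q - q⁻¹) • (K0 - K1) := by
  obtain ⟨hk01, hk10, -⟩ := hmod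
  obtain ⟨h1, -, -, -, h3, h4, -, -, -, -, -, -, h7, h8, -, -, -, -, -, -, h5, h6, -, -⟩ := hL
  have hinv1' : ∀ x : Module.End F V, L00 * (L00i * x) = x := fun x => by
    rw [← mul_assoc, hinv1, one_mul]
  have hinv2' : ∀ x : Module.End F V, L00i * (L00 * x) = x := fun x => by
    rw [← mul_assoc, hinv2, one_mul]
  have hk01' : ∀ x : Module.End F V, K0 * (K1 * x) = x := fun x => by
    rw [← mul_assoc, hk01, one_mul]
  -- K1, K0 commute with L00i
  have dK1 : L00i * K1 = K1 * L00i := by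
    have h := congrArg (fun x => L00i * (x * L00i)) h1
    simpa [mul_assoc, hinv1, hinv2', mul_one] using h
  have dK1' : ∀ x : Module.End F V, L00i * (K1 * x) = K1 * (L00i * x) := fun x => by
    rw [← mul_assoc, dK1, mul_assoc]
  have dK0 : L00i * K0 = K0 * L00i := by
    have h := congrArg (fun x => L00i * (x * L00i)) h7
    simpa [mul_assoc, hinv1, hinv2', mul_one] using h
  have dK0' : ∀ x : Module.End F V, L00i * (K0 * x) = K0 * (L00i * x) := fun x => by
    rw [← mul_assoc, dK0, mul_assoc]
  -- r1 : move E1 left past L01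
  have r1 : L01 * E1 = L11 - L00 * K1 + q • (E1 * L01) := sub_eq_iff_eq_add.mp h4
  -- r11 : move E1 right past L00i
  have r11 : E1 * L00i = L00i * (L10 * L00i) + q • (L00i * E1) := by
    have h := congrArg (fun x => L00i * (x * L00i)) h3
    simp only [sub_mul, smul_mul_assoc, mul_sub, mul_smul_comm, mul_assoc,
      hinv1, hinv2', mul_one] at h
    exact sub_eq_iff_eq_add.mp h
  have r11' : ∀ x : Module.End F V, E1 * (L00i * x)
      = L00i * (L10 * (L00i * x)) + q • (L00i * (E1 * x)) := fun x => by
    rw [← mul_assoc, r11]; simp only [add_mul, smul_mul_assoc, mul_assoc]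
  -- r5 : move K0 left past L01
  have r5 : L01 * K0 = (q ^ 2)⁻¹ • (K0 * L01) := by
    rw [h8, smul_smul, inv_mul_cancel₀ (pow_ne_zero 2 hq), one_smul]
  have r5' : ∀ x : Module.End F V, L01 * (K0 * x) = (q ^ 2)⁻¹ • (K0 * (L01 * x)) := fun x => by
    rw [← mul_assoc, r5]; simp only [smul_mul_assoc, mul_assoc]
  -- r7 : move F0 left past L01
  have r7 : L01 * F0 = q • (F0 * L01)
      - ((q * (a ^ 2)⁻¹) • L00 - (q * (a ^ 2)⁻¹) • (K1 * L11)) := by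
    have h := congrArg (fun x : Module.End F V => q • x) h6
    simp only [smul_sub, smul_smul, mul_inv_cancel₀ hq, one_smul] at h
    rw [← h]; abel
  have r7' : ∀ x : Module.End F V, L01 * (F0 * x) = q • (F0 * (L01 * x))
      - ((q * (a ^ 2)⁻¹) • (L00 * x) - (q * (a ^ 2)⁻¹) • (K1 * (L11 * x))) := fun x => by
    rw [← mul_assoc, r7]
    simp only [sub_mul, smul_mul_assoc, mul_assoc]
  -- r8 : move F0 left past L00i
  have r8 : L00i * F0 = -((a ^ 2)⁻¹ • (K1 * (L00i * (L10 * L00i)))) + q • (F0 * L00i) := by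
    have h := congrArg (fun x => L00i * (x * L00i)) h5
    simp only [sub_mul, smul_mul_assoc, mul_sub, mul_smul_comm, mul_assoc, neg_mul, mul_neg,
      mul_one, hinv1, hinv2', mul_one, smul_neg, dK1'] at h
    exact sub_eq_iff_eq_add.mp h
  have r8' : ∀ x : Module.End F V, L00i * (F0 * x)
      = -((a ^ 2)⁻¹ • (K1 * (L00i * (L10 * (L00i * x))))) + q • (F0 * (L00i * x)) := fun x => by
    rw [← mul_assoc, r8]
    simp only [add_mul, neg_mul, smul_mul_assoc, mul_assoc]
  subst hR hψ
  simp only [mul_add, add_mul, mul_sub, sub_mul, neg_mul, mul_neg, smul_mul_assoc,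
    mul_smul_comm, smul_add, smul_sub, smul_neg, smul_smul, mul_assoc, mul_one, one_mul,
    hinv1', hinv2', hinv1, hinv2, hk01, hk01', dK0, dK0', dK1, dK1',
    r1, r5, r5', r7, r7', r8, r8', r11, r11']
  match_scalars <;> (field_simp; try ring_nf; try field_simp; try ring)
end

section
/- Let F be a field, q nonzero in F with q^2 ≠ 1. In U_q(L(sl_2)), the antipode formulas S(X_{13}) = X_{31}, S(X_{31}) = X_{13}, S(X_{12}) = 1 + X_{31} - X_{31}X_{12}, S(X_{01}) = 1 + X_{13} - X_{13}X_{01} hold, where S is the antipode of the Hopf algebra structure with S(K_i) = K_i^{-1}, S(E_i) = -K_i^{-1}E_i, S(F_i) = -F_iK_i, and the X_{ij} are the equitable generators. -/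
/-- the antipode formulas for the equitable generators:
`S(X₁₃) = X₃₁`, `S(X₃₁) = X₁₃`, `S(X₁₂) = 1 + X₃₁ - X₃₁X₁₂`,
`S(X₀₁) = 1 + X₁₃ - X₁₃X₀₁`.  Here `S` is `F`-linear, antimultiplicative,
unital, and acts on the Chevalley generators by `S(Kᵢ) = Kᵢ⁻¹`,
`S(Eᵢ) = -Kᵢ⁻¹Eᵢ`, `S(Fᵢ) = -FᵢKᵢ`. -/
theorem antipode_on_equitable_generators
    {F : Type*} [Field F] {A : Type*} [Ring A] [Algebra F A]
    (q : F) (hq : q ≠ 0) (hq2 : q ^ 2 ≠ 1)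
    (e0 e1 f0 f1 k0 k1 k0i k1i : A)
    (h : ChevRel q e0 e1 f0 f1 k0 k1 k0i k1i)
    (S : A →ₗ[F] A)
    (hSmul : ∀ x y : A, S (x * y) = S y * S x) (hSone : S 1 = 1)
    (hSk0 : S k0 = k0i) (hSk1 : S k1 = k1i)
    (hSk0i : S k0i = k0) (hSk1i : S k1i = k1)
    (hSe0 : S e0 = -(k0i * e0)) (hSe1 : S e1 = -(k1i * e1))
    (hSf0 : S f0 = -(f0 * k0)) (hSf1 : S f1 = -(f1 * k1))
    (x01 x12 x13 x31 : A)
    (hx13 : x13 = k1) (hx31 : x31 = k0)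
    (hx01 : x01 = k0 + (q * (q - q⁻¹)) • (k0 * f0))
    (hx12 : x12 = k1 - (q - q⁻¹) • e1) :
    S x13 = x31 ∧ S x31 = x13 ∧
    S x12 = 1 + x31 - x31 * x12 ∧
    S x01 = 1 + x13 - x13 * x01 := by
  obtain ⟨hA, hB, hC, hD, hE, hF, -⟩ := h
  have hk1i : k1i = k0 := by
    calc k1i = (k0 * k1) * k1i := by rw [hE, one_mul]
    _ = k0 * (k1 * k1i) := by rw [mul_assoc]
    _ = k0 := by rw [hC, mul_one]
  have hk0i : k0i = k1 := by
    calc k0i = (k1 * k0) * k0i := by rw [hF, one_mul]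
    _ = k1 * (k0 * k0i) := by rw [mul_assoc]
    _ = k1 := by rw [hA, mul_one]
  refine ⟨by rw [hx13, hx31, hSk1, hk1i], by rw [hx31, hx13, hSk0, hk0i], ?_, ?_⟩
  · rw [hx12, hx31, map_sub, map_smul, hSk1, hSe1, hk1i]
    rw [mul_sub, hE, mul_smul_comm, smul_neg, sub_neg_eq_add]
    abel
  · rw [hx01, hx13, map_add, map_smul, hSk0, hSmul, hSf0, hSk0, hk0i]
    rw [mul_add, hF, mul_smul_comm, neg_mul, mul_assoc, hE, mul_one,
      ← mul_assoc, hF, one_mul, smul_neg]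
    abel
end
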